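/- Let (x*, λ*, μ*) satisfy the KKT conditions for min_{x∈Δ} f(x). Then there exists ρ > 0 such that for each x ∈ Δ with ‖x − x*‖ < ρ one has {i : x*_i = 0, μ_i(x*) > 0} ⊆ A(x) ⊆ {i : x*_i = 0}. Furthermore, if strict complementarity holds at x* (i.e., μ*_i > 0 for every i with x*_i = 0), then {i : x*_i = 0, μ_i(x*) > 0} = A(x) = {i : x*_i = 0} for each x ∈ Δ with ‖x − x*‖ < ρ. -/

import Mathlib

open scoped BigOperators

noncomputable section

/-- The unit simplex in `ℝⁿ`. -/
def unitSimplex (n : ℕ) : Set (EuclideanSpace ℝ (Fin n)) :=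
  {x | (∑ i, x i) = 1 ∧ ∀ i, 0 ≤ x i}

/-- The multiplier function `μᵢ(x) = ∇ᵢ f(x) - ∇f(x)ᵀx`. -/
def muFun {n : ℕ} (f : EuclideanSpace ℝ (Fin n) → ℝ) (x : EuclideanSpace ℝ (Fin n))
    (i : Fin n) : ℝ :=
  gradient f x i - ∑ j, gradient f x j * x j

/-- The active-set estimate `A(x) = {i : xᵢ ≤ ε μᵢ(x)}` (with parameter `ε > 0`). -/
def activeEstimate {n : ℕ} (f : EuclideanSpace ℝ (Fin n) → ℝ) (eps : ℝ)
    (x : EuclideanSpace ℝ (Fin n)) : Set (Fin n) :=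
  {i | x i ≤ eps * muFun f x i}

/-!
Write `gᵢ(x) = xᵢ - ε μᵢ(x)`, so that `i ∈ A(x)` iff `gᵢ(x) ≤ 0`; since `f` is `C¹`, every `gᵢ`
is continuous. The KKT conditions on the simplex force `λ(x*) = λ*` and `μ(x*) = μ*`, and
complementarity gives `gᵢ(x*) = x*ᵢ > 0` off the active set and `gᵢ(x*) = -ε μ*ᵢ < 0` on the
strictly active indices. These finitely many strict signs persist on a ball around `x*`.
-/

open Filter Topology

theorem ContDiff.continuous_gradient {F : Type*} [NormedAddCommGroup F] [InnerProductSpace ℝ F]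
    [CompleteSpace F] {f : F → ℝ} (hf : ContDiff ℝ 1 f) : Continuous (gradient f) :=
  (InnerProductSpace.toDual ℝ F).symm.continuous.comp (hf.continuous_fderiv one_ne_zero)

section ActiveEstimate

variable {n : ℕ} {f : EuclideanSpace ℝ (Fin n) → ℝ}

theorem continuous_muFun (hf : ContDiff ℝ 1 f) (i : Fin n) :
    Continuous fun x => muFun f x i := by
  have hgrad (j : Fin n) : Continuous fun x => gradient f x j :=
    (PiLp.continuous_apply 2 _ j).comp hf.continuous_gradient
  exact (hgrad i).sub <| continuous_finsetSum _ fun j _ =>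
    (hgrad j).mul (PiLp.continuous_apply 2 _ j)

theorem eventually_mem_activeEstimate (hf : ContDiff ℝ 1 f) {eps : ℝ}
    {xstar : EuclideanSpace ℝ (Fin n)} {i : Fin n} (h : xstar i < eps * muFun f xstar i) :
    ∀ᶠ x in 𝓝 xstar, i ∈ activeEstimate f eps x :=
  (((PiLp.continuous_apply 2 _ i).continuousAt).eventually_lt
    (continuous_const.mul (continuous_muFun hf i)).continuousAt h).mono fun _ hx => hx.le

theorem eventually_notMem_activeEstimate (hf : ContDiff ℝ 1 f) {eps : ℝ}
    {xstar : EuclideanSpace ℝ (Fin n)} {i : Fin n} (h : eps * muFun f xstar i < xstar i) :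
    ∀ᶠ x in 𝓝 xstar, i ∉ activeEstimate f eps x :=
  ((continuous_const.mul (continuous_muFun hf i)).continuousAt.eventually_lt
    (PiLp.continuous_apply 2 _ i).continuousAt h).mono fun _ hx => not_le.2 hx

theorem eventually_activeEstimate_sandwich (hf : ContDiff ℝ 1 f) {eps : ℝ} (heps : 0 < eps)
    {xstar : EuclideanSpace ℝ (Fin n)} (hnonneg : ∀ i, 0 ≤ xstar i)
    (hcomp : ∀ i, muFun f xstar i * xstar i = 0) :
    ∀ᶠ x in 𝓝 xstar,
      {i | xstar i = 0 ∧ 0 < muFun f xstar i} ⊆ activeEstimate f eps x ∧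
      activeEstimate f eps x ⊆ {i | xstar i = 0} := by
  refine (eventually_all.2 fun i => ?_).and (eventually_all.2 fun i => ?_)
  · refine eventually_imp_distrib_left.2 fun ⟨hx, hmu⟩ => eventually_mem_activeEstimate hf ?_
    rw [hx]
    positivity
  · by_cases hx : xstar i = 0
    · exact .of_forall fun _ _ => hx
    · have hmu : muFun f xstar i = 0 := (mul_eq_zero.1 (hcomp i)).resolve_right hx
      refine (eventually_notMem_activeEstimate hf ?_).mono fun _ hA hmem => absurd hmem hA
      rw [hmu, mul_zero]
      exact (hnonneg i).lt_of_ne' hx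

theorem muFun_eq_of_kkt {xstar : EuclideanSpace ℝ (Fin n)} {lam : ℝ} {mu : Fin n → ℝ}
    (hsum : ∑ i, xstar i = 1) (hgrad : ∀ i, gradient f xstar i - lam - mu i = 0)
    (hcomp : ∑ i, mu i * xstar i = 0) (i : Fin n) : muFun f xstar i = mu i := by
  have hgrad' (j : Fin n) : gradient f xstar j = lam + mu j := by linarith [hgrad j]
  have hlam : ∑ j, gradient f xstar j * xstar j = lam := by
    simp only [hgrad', add_mul, Finset.sum_add_distrib, ← Finset.mul_sum, hsum, hcomp]
    ring
  rw [muFun, hlam, hgrad']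
  ring

end ActiveEstimate

/-- In a neighborhood of a KKT point, the active-set estimate is squeezed between the
strictly complementary active variables and the active set; under strict complementarity
all three sets coincide. -/
theorem active_set_identification (n : ℕ) (f : EuclideanSpace ℝ (Fin n) → ℝ)
    (hf : ContDiff ℝ 1 f) (eps : ℝ) (heps : 0 < eps)
    (xstar : EuclideanSpace ℝ (Fin n)) (hxstar : xstar ∈ unitSimplex n)
    (lam : ℝ) (mu : Fin n → ℝ)
    (hkkt : (∀ i, gradient f xstar i - lam - mu i = 0) ∧
      (∑ i, mu i * xstar i) = 0 ∧ (∀ i, 0 ≤ mu i)) :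
    ∃ rho > (0 : ℝ),
      (∀ x ∈ unitSimplex n, ‖x - xstar‖ < rho →
        {i | xstar i = 0 ∧ 0 < muFun f xstar i} ⊆ activeEstimate f eps x ∧
        activeEstimate f eps x ⊆ {i | xstar i = 0}) ∧
      ((∀ i, xstar i = 0 → 0 < mu i) →
        ∀ x ∈ unitSimplex n, ‖x - xstar‖ < rho →
          {i | xstar i = 0 ∧ 0 < muFun f xstar i} = activeEstimate f eps x ∧
          activeEstimate f eps x = {i | xstar i = 0}) := by
  obtain ⟨hgrad, hsum, hmu⟩ := hkkt
  have hmuFun := muFun_eq_of_kkt hxstar.1 hgrad hsum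
  have hcomp (i : Fin n) : muFun f xstar i * xstar i = 0 := by
    rw [hmuFun]
    exact (Finset.sum_eq_zero_iff_of_nonneg fun j _ => mul_nonneg (hmu j) (hxstar.2 j)).1
      hsum i (Finset.mem_univ i)
  obtain ⟨rho, hrho, hball⟩ := Metric.eventually_nhds_iff.1
    (eventually_activeEstimate_sandwich hf heps hxstar.2 hcomp)
  have hsandwich (x : EuclideanSpace ℝ (Fin n)) (hx : ‖x - xstar‖ < rho) :=
    hball (dist_eq_norm x xstar ▸ hx)
  refine ⟨rho, hrho, fun x _ hx => hsandwich x hx, fun hsc x _ hx => ?_⟩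
  obtain ⟨hlow, hup⟩ := hsandwich x hx
  have hactive : {i | xstar i = 0} ⊆ {i | xstar i = 0 ∧ 0 < muFun f xstar i} :=
    fun i hi => ⟨hi, (hmuFun i).symm ▸ hsc i hi⟩
  exact ⟨hlow.antisymm (hup.trans hactive), hup.antisymm (hactive.trans hlow)⟩
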